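/- arXiv:2206.15019 — 4 statements merged into one kernel-verified Lean document; each statement's English description precedes it below -/
import Mathlib

section
/- Let X be a real Hilbert space and f, g ∈ Γ₀(X). Assume (i) argmin_{x∈X}(f(x)+g(x)) ≠ ∅, (ii) argmin_{u∈X}(f*(u)+g*(−u)) ≠ ∅, and (iii) min_{x∈X}(f(x)+g(x)) = −min_{u∈X}(f*(u)+g*(−u)). Define the Douglas–Rachford splitting operator T_DRS := (2 prox_f − I) ∘ (2 prox_g − I). Then prox_g(Fix(T_DRS)) = argmin_{x∈X}(f(x)+g(x)), i.e., the image under prox_g of the fixed point set of T_DRS equals the set of minimizers of f + g. -/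
noncomputable section

open Filter Topology Bornology
open scoped InnerProductSpace Pointwise Classical

/-- A function with values in the extended reals is *proper* if it is somewhere finite
and nowhere `⊥`. -/
def EProper {H : Type*} (f : H → EReal) : Prop :=
  (∃ x, f x ≠ ⊤) ∧ ∀ x, f x ≠ ⊥

/-- Convexity for extended-real-valued functions. -/
def EConvex {H : Type*} [AddCommGroup H] [Module ℝ H] (f : H → EReal) : Prop :=
  ∀ x y : H, ∀ a b : ℝ, 0 ≤ a → 0 ≤ b → a + b = 1 →
    f (a • x + b • y) ≤ (a : EReal) * f x + (b : EReal) * f y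

/-- The class `Γ₀(H)` of proper lower semicontinuous convex functions `H → (-∞, +∞]`. -/
def Gamma0 {H : Type*} [NormedAddCommGroup H] [NormedSpace ℝ H] (f : H → EReal) : Prop :=
  EProper f ∧ LowerSemicontinuous f ∧ EConvex f

/-- Effective domain `dom f = {x | f x < ∞}`. -/
def edom {H : Type*} (f : H → EReal) : Set H := {x | f x ≠ ⊤}

/-- Set of global minimizers of `f`. -/
def argminSet {H : Type*} (f : H → EReal) : Set H := {x | ∀ y, f x ≤ f y}

/-- Fenchel conjugate `f*(u) = sup_x (⟪x,u⟫ - f x)`. -/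
def econj {H : Type*} [NormedAddCommGroup H] [InnerProductSpace ℝ H]
    (f : H → EReal) (u : H) : EReal :=
  ⨆ x : H, ((⟪x, u⟫_ℝ : EReal) - f x)

/-- Subdifferential `∂f(x) = {u | ∀ y, ⟪y - x, u⟫ + f x ≤ f y}`. -/
def esubdiff {H : Type*} [NormedAddCommGroup H] [InnerProductSpace ℝ H]
    (f : H → EReal) (x : H) : Set H :=
  {u | ∀ y : H, ((⟪y - x, u⟫_ℝ : ℝ) : EReal) + f x ≤ f y}

/-- `p` is the proximal point of `f` at `x`, i.e. a minimizer of
`y ↦ f y + (1/2)‖y - x‖²` (which is unique for `f ∈ Γ₀`). -/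
def IsProxPt {H : Type*} [NormedAddCommGroup H] (f : H → EReal) (x p : H) : Prop :=
  ∀ y : H, f p + ((((1:ℝ)/2) * ‖p - x‖ ^ 2 : ℝ) : EReal)
    ≤ f y + ((((1:ℝ)/2) * ‖y - x‖ ^ 2 : ℝ) : EReal)

/-- Indicator function of a set, with values in the extended reals. -/
def eind {H : Type*} (C : Set H) : H → EReal := fun x => if x ∈ C then 0 else ⊤

/-- Strong relative interior: the points `x ∈ C` such that the cone generated by `C - x`
coincides with the closed linear span of `C - x`. -/
def sriSet {H : Type*} [NormedAddCommGroup H] [NormedSpace ℝ H] (C : Set H) : Set H :=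
  {x | x ∈ C ∧
    {y | ∃ t : ℝ, 0 < t ∧ ∃ c ∈ C, y = t • (c - x)} =
      closure ((Submodule.span ℝ ((fun c => c - x) '' C) : Submodule ℝ H) : Set H)}


/-!
For a convex `h`, `p = prox_h w` iff `w - p ∈ ∂h(p)`. If `z` is fixed by `T_DRS` and
`x = prox_g z`, then `x = prox_f (2x - z)`, so `x - z ∈ ∂f(x)` and `z - x ∈ ∂g(x)`; opposite
subgradients of `f` and `g` at `x` make `x` a minimizer of `f + g`. Conversely, if `x` minimizes
`f + g` and `v` solves the dual problem, the zero duality gap forces equality in both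
Fenchel–Young inequalities, so `v ∈ ∂f(x)` and `-v ∈ ∂g(x)`. Hence `z = x - v` has
`prox_g z = x` and `prox_f (2x - z) = prox_f (x + v) = x`, i.e. `T_DRS z = 2x - (x + v) = z`.
Uniqueness of the proximal point follows from monotonicity of `∂h`.
-/

section ConvexAnalysis

theorem iInf_eq_of_mem_argminSet {H : Type*} {f : H → EReal} {x : H} (hx : x ∈ argminSet f) :
    ⨅ y, f y = f x :=
  le_antisymm (iInf_le f x) (le_iInf hx)

variable {H : Type*} [NormedAddCommGroup H]

open Set in
theorem le_of_forall_mem_Ioc_le_add_mul {α β γ : ℝ} (h : ∀ t ∈ Ioc (0 : ℝ) 1, α ≤ β + t * γ) :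
    α ≤ β := by
  have hlim : Tendsto (fun t : ℝ => β + t * γ) (𝓝[>] 0) (𝓝 β) := by
    have hcont : Continuous fun t : ℝ => β + t * γ := by fun_prop
    simpa using (hcont.tendsto 0).mono_left nhdsWithin_le_nhds
  exact ge_of_tendsto hlim (by filter_upwards [Ioc_mem_nhdsGT one_pos] with t ht using h t ht)

theorem IsProxPt.ne_top {f : H → EReal} (hf : ∃ x, f x ≠ ⊤) {w p : H} (h : IsProxPt f w p) :
    f p ≠ ⊤ := by
  obtain ⟨x, hx⟩ := hf
  intro htop
  have hle := h x
  rw [htop, EReal.top_add_coe, top_le_iff] at hle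
  exact EReal.add_ne_top hx (EReal.coe_ne_top _) hle

variable [InnerProductSpace ℝ H]

/-- Restrict to the segment `[p, y]`: at step `t` convexity gains `t` times the defect while the
quadratic error costs only `t²`. -/
theorem mem_esubdiff_of_forall_le_add_sq {f : H → EReal} (hconv : EConvex f)
    (hbot : ∀ x, f x ≠ ⊥) {p u : H} (hp : f p ≠ ⊤) (c : ℝ)
    (h : ∀ y, ((⟪y - p, u⟫_ℝ : ℝ) : EReal) + f p ≤ f y + ((c * ‖y - p‖ ^ 2 : ℝ) : EReal)) :
    u ∈ esubdiff f p := by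
  intro y
  lift f p to ℝ using ⟨hp, hbot p⟩ with a ha
  induction hy : f y using EReal.rec with
  | bot => exact absurd hy (hbot y)
  | top => exact le_top
  | coe b =>
    norm_cast
    refine le_of_forall_mem_Ioc_le_add_mul (γ := c * ‖y - p‖ ^ 2) fun t ⟨ht0, ht1⟩ => ?_
    have hseg : (1 - t) • p + t • y - p = t • (y - p) := by module
    have hquad := h ((1 - t) • p + t • y)
    have hconv_t := hconv p y (1 - t) t (by linarith) ht0.le (by ring)
    rw [hseg, inner_smul_left, norm_smul, Real.norm_eq_abs, abs_of_pos ht0] at hquad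
    rw [← ha, hy] at hconv_t
    have hreal : t * ⟪y - p, u⟫_ℝ + a ≤ (1 - t) * a + t * b + c * (t * ‖y - p‖) ^ 2 := by
      have := hquad.trans (add_le_add_left hconv_t _)
      simp only [conj_trivial] at this
      exact_mod_cast this
    nlinarith

theorem esubdiff_monotone {f : H → EReal} {x y u v : H} (hx : f x ≠ ⊤) (hx' : f x ≠ ⊥)
    (hu : u ∈ esubdiff f x) (hv : v ∈ esubdiff f y) : 0 ≤ ⟪x - y, u - v⟫_ℝ := by
  have hxy := hu y
  have hyx := hv x
  lift f x to ℝ using ⟨hx, hx'⟩ with a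
  induction hy : f y using EReal.rec with
  | bot =>
    rw [hy] at hxy
    exact absurd (le_bot_iff.1 hxy) (by norm_cast)
  | top =>
    rw [hy, EReal.add_top_of_ne_bot (EReal.coe_ne_bot _)] at hyx
    exact absurd (top_le_iff.1 hyx) (EReal.coe_ne_top _)
  | coe b =>
    rw [hy] at hxy hyx
    have h1 : ⟪y - x, u⟫_ℝ + a ≤ b := by exact_mod_cast hxy
    have h2 : ⟪x - y, v⟫_ℝ + b ≤ a := by exact_mod_cast hyx
    rw [← neg_sub x y, inner_neg_left] at h1
    rw [inner_sub_right]
    linarith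

theorem half_norm_sub_sq_add_inner (y w p : H) :
    1/2 * ‖y - w‖ ^ 2 + ⟪y - p, w - p⟫_ℝ = 1/2 * ‖y - p‖ ^ 2 + 1/2 * ‖p - w‖ ^ 2 := by
  rw [show y - w = (y - p) - (w - p) by abel, show p - w = -(w - p) by abel, norm_neg,
    norm_sub_sq_real (y - p)]
  ring

theorem isProxPt_of_mem_esubdiff {f : H → EReal} {w p : H} (h : w - p ∈ esubdiff f p) :
    IsProxPt f w p := by
  intro y
  have hquad : 1/2 * ‖p - w‖ ^ 2 ≤ ⟪y - p, w - p⟫_ℝ + 1/2 * ‖y - w‖ ^ 2 := by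
    nlinarith [half_norm_sub_sq_add_inner y w p, sq_nonneg ‖y - p‖]
  calc f p + ((1/2 * ‖p - w‖ ^ 2 : ℝ) : EReal)
      ≤ f p + ((⟪y - p, w - p⟫_ℝ + 1/2 * ‖y - w‖ ^ 2 : ℝ) : EReal) := by gcongr
    _ = ((⟪y - p, w - p⟫_ℝ : ℝ) : EReal) + f p + ((1/2 * ‖y - w‖ ^ 2 : ℝ) : EReal) := by
        rw [EReal.coe_add, ← add_assoc, add_comm (f p)]
    _ ≤ f y + ((1/2 * ‖y - w‖ ^ 2 : ℝ) : EReal) := add_le_add (h y) le_rfl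

theorem mem_esubdiff_of_isProxPt {f : H → EReal} (hf : EProper f) (hconv : EConvex f) {w p : H}
    (h : IsProxPt f w p) : w - p ∈ esubdiff f p := by
  refine mem_esubdiff_of_forall_le_add_sq hconv hf.2 (h.ne_top hf.1) (1/2) fun y => ?_
  rw [← (EReal.addLECancellable_coe (1/2 * ‖p - w‖ ^ 2)).add_le_add_iff_right]
  calc ((⟪y - p, w - p⟫_ℝ : ℝ) : EReal) + f p + ((1/2 * ‖p - w‖ ^ 2 : ℝ) : EReal)
      = f p + ((1/2 * ‖p - w‖ ^ 2 : ℝ) : EReal) + ((⟪y - p, w - p⟫_ℝ : ℝ) : EReal) := by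
        rw [add_comm _ (f p), add_right_comm]
    _ ≤ f y + ((1/2 * ‖y - w‖ ^ 2 : ℝ) : EReal) + ((⟪y - p, w - p⟫_ℝ : ℝ) : EReal) :=
        add_le_add (h y) le_rfl
    _ = f y + ((1/2 * ‖y - p‖ ^ 2 : ℝ) : EReal) + ((1/2 * ‖p - w‖ ^ 2 : ℝ) : EReal) := by
        rw [add_assoc, add_assoc, ← EReal.coe_add, ← EReal.coe_add, half_norm_sub_sq_add_inner]

theorem IsProxPt.eq {f : H → EReal} (hf : EProper f) (hconv : EConvex f) {w p q : H}
    (hp : IsProxPt f w p) (hq : IsProxPt f w q) : p = q := by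
  have hmono := esubdiff_monotone (hp.ne_top hf.1) (hf.2 p)
    (mem_esubdiff_of_isProxPt hf hconv hp) (mem_esubdiff_of_isProxPt hf hconv hq)
  rw [show w - p - (w - q) = -(p - q) by abel, inner_neg_right, neg_nonneg] at hmono
  exact sub_eq_zero.1 (real_inner_self_nonpos.1 hmono)

theorem mem_argminSet_add_of_mem_esubdiff {f g : H → EReal} {x u : H} (hf : u ∈ esubdiff f x)
    (hg : -u ∈ esubdiff g x) : x ∈ argminSet (fun x => f x + g x) := by
  intro y
  have hsum := add_le_add (hf y) (hg y)
  rwa [add_add_add_comm, ← EReal.coe_add, inner_neg_right, add_neg_cancel, EReal.coe_zero,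
    zero_add] at hsum

theorem le_econj (f : H → EReal) (x u : H) : (⟪x, u⟫_ℝ : EReal) - f x ≤ econj f u :=
  le_iSup (fun y => (⟪y, u⟫_ℝ : EReal) - f y) x

theorem econj_ne_bot {f : H → EReal} (hf : ∃ x, f x ≠ ⊤) (u : H) : econj f u ≠ ⊥ := by
  obtain ⟨x, hx⟩ := hf
  refine ne_bot_of_le_ne_bot ?_ (le_econj f x u)
  rw [sub_eq_add_neg, Ne, EReal.add_eq_bot_iff, EReal.neg_eq_bot_iff]
  simp [hx]

theorem mem_esubdiff_of_econj_le {f : H → EReal} {x u : H} {a : ℝ} (hx : f x = a)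
    (h : econj f u ≤ ((⟪x, u⟫_ℝ - a : ℝ) : EReal)) : u ∈ esubdiff f x := by
  intro y
  have hy := (le_econj f y u).trans h
  rw [hx]
  induction hfy : f y using EReal.rec with
  | bot =>
    rw [hfy, EReal.coe_sub_bot] at hy
    exact (EReal.coe_ne_top _ (top_le_iff.1 hy)).elim
  | top => exact le_top
  | coe b =>
    rw [hfy] at hy
    have hy' : ⟪y, u⟫_ℝ - b ≤ ⟪x, u⟫_ℝ - a := by exact_mod_cast hy
    have : ⟪y - x, u⟫_ℝ + a ≤ b := by rw [inner_sub_left]; linarith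
    exact_mod_cast this

/-- Weak duality is the sum of two Fenchel–Young inequalities; a zero gap forces equality in
both. -/
theorem mem_esubdiff_of_eq_neg_econj_add {f g : H → EReal} (hf : EProper f) (hg : EProper g)
    {x v : H} (h : f x + g x = -(econj f v + econj g (-v))) :
    v ∈ esubdiff f x ∧ -v ∈ esubdiff g x := by
  have hF := econj_ne_bot hf.1 v
  have hG := econj_ne_bot hg.1 (-v)
  have hP : f x + g x ≠ ⊤ := by
    rw [h, Ne, EReal.neg_eq_top_iff, EReal.add_eq_bot_iff]
    tauto
  obtain ⟨hfx, hgx⟩ := (EReal.add_ne_top_iff_ne_top₂ (hf.2 x) (hg.2 x)).1 hP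
  lift f x to ℝ using ⟨hfx, hf.2 x⟩ with a ha
  lift g x to ℝ using ⟨hgx, hg.2 x⟩ with b hb
  have hD : econj f v + econj g (-v) = ((-(a + b) : ℝ) : EReal) := by
    rw [← neg_neg (econj f v + econj g (-v)), ← h]
    norm_cast
  obtain ⟨hFt, hGt⟩ := (EReal.add_ne_top_iff_ne_top₂ hF hG).1 (hD ▸ EReal.coe_ne_top _)
  lift econj f v to ℝ using ⟨hFt, hF⟩ with F hFv
  lift econj g (-v) to ℝ using ⟨hGt, hG⟩ with G hGv
  have hFG : F + G = -(a + b) := by exact_mod_cast hD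
  have hFa : ⟪x, v⟫_ℝ - a ≤ F := by
    have := le_econj f x v
    rw [← ha, ← hFv] at this
    exact_mod_cast this
  have hGb : ⟪x, -v⟫_ℝ - b ≤ G := by
    have := le_econj g x (-v)
    rw [← hb, ← hGv] at this
    exact_mod_cast this
  rw [inner_neg_right] at hGb
  refine ⟨mem_esubdiff_of_econj_le ha.symm ?_, mem_esubdiff_of_econj_le hb.symm ?_⟩
  · rw [← hFv]
    exact_mod_cast (by linarith : F ≤ ⟪x, v⟫_ℝ - a)
  · rw [← hGv, inner_neg_right]
    exact_mod_cast (by linarith : G ≤ -⟪x, v⟫_ℝ - b)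

end ConvexAnalysis

theorem statement0_general
    {X : Type*} [NormedAddCommGroup X] [InnerProductSpace ℝ X]
    (f g : X → EReal) (hf : Gamma0 f) (hg : Gamma0 g)
    (hdual : (argminSet (fun u => econj f u + econj g (-u))).Nonempty)
    (hminmin : (⨅ x : X, (f x + g x)) = - ⨅ u : X, (econj f u + econj g (-u)))
    (proxf proxg : X → X)
    (hproxf : ∀ x, IsProxPt f x (proxf x)) (hproxg : ∀ x, IsProxPt g x (proxg x))
    (T : X → X)
    (hT : ∀ z, T z = (2:ℝ) • proxf ((2:ℝ) • proxg z - z) - ((2:ℝ) • proxg z - z)) :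
    proxg '' {z | T z = z} = argminSet (fun x => f x + g x) := by
  obtain ⟨hfP, -, hfC⟩ := hf
  obtain ⟨hgP, -, hgC⟩ := hg
  ext x
  constructor
  · rintro ⟨z, hz, rfl⟩
    set w := (2:ℝ) • proxg z - z with hw
    have hfix : proxf w = proxg z := by
      refine smul_right_injective X (two_ne_zero (α := ℝ)) ?_
      calc (2:ℝ) • proxf w = T z + w := by rw [hT, ← hw]; abel
        _ = (2:ℝ) • proxg z := by rw [show T z = z from hz, hw]; abel
    have hsubf := mem_esubdiff_of_isProxPt hfP hfC (hfix ▸ hproxf w)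
    have hsubg := mem_esubdiff_of_isProxPt hgP hgC (hproxg z)
    refine mem_argminSet_add_of_mem_esubdiff hsubf ?_
    convert hsubg using 1
    rw [hw]; module
  · intro hx
    obtain ⟨v, hv⟩ := hdual
    rw [iInf_eq_of_mem_argminSet hx, iInf_eq_of_mem_argminSet hv] at hminmin
    obtain ⟨hsubf, hsubg⟩ := mem_esubdiff_of_eq_neg_econj_add hfP hgP hminmin
    have hpg : proxg (x - v) = x :=
      (hproxg _).eq hgP hgC (isProxPt_of_mem_esubdiff (by rwa [sub_sub_cancel_left]))
    have hpf : proxf (x + v) = x :=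
      (hproxf _).eq hfP hfC (isProxPt_of_mem_esubdiff (by rwa [add_sub_cancel_left]))
    refine ⟨x - v, ?_, hpg⟩
    show T (x - v) = x - v
    rw [hT, hpg, show (2:ℝ) • x - (x - v) = x + v by module, hpf]
    module

/-- Proposition 1(a): Douglas–Rachford fixed point characterization.
If `f, g ∈ Γ₀(X)` satisfy the primal/dual attainment and zero-duality-gap conditions, then
`prox_g (Fix T_DRS) = argmin (f + g)`, where `T_DRS = (2 prox_f - I) ∘ (2 prox_g - I)`. -/
theorem statement0
    {X : Type*} [NormedAddCommGroup X] [InnerProductSpace ℝ X] [CompleteSpace X]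
    (f g : X → EReal) (hf : Gamma0 f) (hg : Gamma0 g)
    (hprimal : (argminSet (fun x => f x + g x)).Nonempty)
    (hdual : (argminSet (fun u => econj f u + econj g (-u))).Nonempty)
    (hminmin : (⨅ x : X, (f x + g x)) = - ⨅ u : X, (econj f u + econj g (-u)))
    (proxf proxg : X → X)
    (hproxf : ∀ x, IsProxPt f x (proxf x)) (hproxg : ∀ x, IsProxPt g x (proxg x))
    (T : X → X)
    (hT : ∀ z, T z = (2:ℝ) • proxf ((2:ℝ) • proxg z - z) - ((2:ℝ) • proxg z - z)) :
    proxg '' {z | T z = z} = argminSet (fun x => f x + g x) :=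
  statement0_general f g hf hg hdual hminmin proxf proxg hproxf hproxg T hT
end
end

section
/- Let X be a real Hilbert space and K = ℝ^m. Let f ∈ Γ₀(X), g = ⊕_{i=1}^m g_i with g_i ∈ Γ₀(ℝ), and A : X → ℝ^m : x ↦ (A₁x, …, A_mx) with nonzero bounded linear functionals A_i : X → ℝ. Assume S_p := argmin_{x∈X}(f(x) + ∑_{i=1}^m g_i(A_i x)) ≠ ∅ and the qualification condition 0 ∈ sri(dom(g) − A(dom(f))) holds. Define H : X^{m+1} → (−∞,∞] : (x^{(1)},…,x^{(m+1)}) ↦ ∑_{i=1}^m g_i(A_i x^{(i)}) + f(x^{(m+1)}) and the diagonal subspace D := {(x^{(1)},…,x^{(m+1)}) ∈ X^{m+1} : x^{(i)} = x^{(j)} for all i,j}. Then: (i) argmin(H + ι_D) over X^{m+1} is nonempty; (ii) argmin of U ↦ H*(U) + (ι_D)*(−U) over X^{m+1} is nonempty; and (iii) min(H + ι_D) = −min of U ↦ H*(U) + (ι_D)*(−U). -/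
noncomputable section

open Filter Topology Bornology
open scoped InnerProductSpace Pointwise Classical

/-- Fenchel conjugate on the product Hilbert space `X^n`
(with inner product `⟪Z, U⟫ = ∑ i ⟪Z i, U i⟫`). -/
def econjPi {X : Type*} [NormedAddCommGroup X] [InnerProductSpace ℝ X] {n : ℕ}
    (F : (Fin n → X) → EReal) (U : Fin n → X) : EReal :=
  ⨆ Z : Fin n → X, (((∑ i, ⟪Z i, U i⟫_ℝ : ℝ) : EReal) - F Z)

/-!
Write `T x = (A₁ x, …, A_m x)` and `G = ⊕ gᵢ`; the primal problem `min f + G ∘ T` is attained,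
with a finite value `μ`. In finite dimensions the qualification condition says that every
direction of the span of `C = dom G - T (dom f)` points into `C`. Hence the strict epigraph
`{(r - T x, t) | f x + G r < t}` of the perturbation function has nonempty interior inside
`span C × ℝ`, and separating it from `(0, μ)` gives a non-vertical hyperplane, i.e. a Lagrange
multiplier `s` with `μ + s (r - T x) ≤ f x + G r`. By the Riesz representation, `s` is a point
`U ∈ X^{m+1}` with `∑ U = 0`, for which `(ι_D)* (-U) = 0` and `H* U ≤ -μ`; by Fenchel–Young no
dual value is below `-μ`, so both problems are solved, with opposite values.
-/

lemma map_prod_eq_map_fst_add_mul {V 𝓕 : Type*} [AddCommGroup V] [Module ℝ V]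
    [FunLike 𝓕 (V × ℝ) ℝ] [LinearMapClass 𝓕 ℝ (V × ℝ) ℝ] (F : 𝓕) (y : V) (t : ℝ) :
    F (y, t) = F (y, 0) + t * F (0, 1) := by
  rw [show (y, t) = (y, (0 : ℝ)) + t • ((0 : V), (1 : ℝ)) from Prod.ext (by simp) (by simp),
    map_add, map_smul, smul_eq_mul]

lemma apply_zero_one_neg_of_forall_le {V : Type*} [AddCommGroup V] [Module ℝ V]
    {E : Set (V × ℝ)} {F : V × ℝ →ₗ[ℝ] ℝ} (hF0 : F ≠ 0) {μ : ℝ}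
    (hF : ∀ p ∈ E, F p ≤ F (0, μ))
    (hup : ∀ y t t', (y, t) ∈ E → t ≤ t' → (y, t') ∈ E)
    (habs : ∀ y, ∃ ε : ℝ, 0 < ε ∧ ∃ t, (ε • y, t) ∈ E) : F (0, 1) < 0 := by
  have hsplit := map_prod_eq_map_fst_add_mul F
  set c := F (0, 1)
  have hF00 : F (0, 0) = 0 := by rw [Prod.mk_zero_zero, map_zero]
  have hμ : F (0, μ) = μ * c := by rw [hsplit, hF00, zero_add]
  have hE : ∀ y t, (y, t) ∈ E → F (y, 0) + t * c ≤ μ * c := fun y t h => by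
    rw [← hsplit, ← hμ]
    exact hF _ h
  rcases lt_trichotomy c 0 with hc | hc | hc
  · exact hc
  · refine absurd (LinearMap.ext fun ⟨y, t⟩ => ?_) hF0
    have hle : ∀ y, F (y, 0) ≤ 0 := fun y => by
      obtain ⟨ε, hε, t, h⟩ := habs y
      have := hE _ _ h
      rw [show ((ε • y, (0 : ℝ)) : V × ℝ) = ε • (y, 0) by simp, map_smul, smul_eq_mul, hc,
        mul_zero, mul_zero, add_zero] at this
      nlinarith
    have := hle (-y)
    rw [show ((-y, (0 : ℝ)) : V × ℝ) = -(y, 0) by simp, map_neg] at this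
    rw [hsplit, hc, mul_zero, add_zero, LinearMap.zero_apply]
    linarith [hle y]
  · -- moving up the vertical direction would push `F` above its supremum on `E`
    obtain ⟨_, _, t₀, h₀⟩ := habs 0
    rw [smul_zero] at h₀
    have h₀c := hE _ _ h₀
    rw [hF00] at h₀c
    have := hE _ _ (hup _ _ (t₀ + (μ * c - t₀ * c + 1) / c) h₀
      (le_add_of_nonneg_right (div_nonneg (by linarith) hc.le)))
    rw [hF00, add_mul, div_mul_cancel₀ _ hc.ne'] at this
    linarith

section Separation

variable {V : Type*} [NormedAddCommGroup V] [NormedSpace ℝ V] [FiniteDimensional ℝ V]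
  {E : Set (V × ℝ)}

lemma interior_nonempty_of_forall_smul_mem (hE : Convex ℝ E)
    (hup : ∀ y t t', (y, t) ∈ E → t ≤ t' → (y, t') ∈ E)
    (habs : ∀ y, ∃ ε : ℝ, 0 < ε ∧ ∃ t, (ε • y, t) ∈ E) : (interior E).Nonempty := by
  obtain ⟨_, _, t₀, h₀⟩ := habs 0
  rw [smul_zero] at h₀
  rw [hE.interior_nonempty_iff_affineSpan_eq_top,
    AffineSubspace.affineSpan_eq_top_iff_vectorSpan_eq_top_of_nonempty ℝ _ _ ⟨_, h₀⟩,
    vectorSpan_eq_span_vsub_set_right ℝ h₀, eq_top_iff]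
  set S := Submodule.span ℝ ((· -ᵥ ((0 : V), t₀)) '' E)
  have hvert : ((0 : V), (1 : ℝ)) ∈ S :=
    Submodule.subset_span ⟨(0, t₀ + 1), hup _ _ _ h₀ (by linarith), by simp⟩
  rintro ⟨y, t⟩ -
  obtain ⟨ε, hε, τ, hτ⟩ := habs y
  have hy : (ε • y, τ - t₀) ∈ S := Submodule.subset_span ⟨_, hτ, by simp⟩
  have hyt : (y, t) = ε⁻¹ • (ε • y, τ - t₀) + (t - ε⁻¹ * (τ - t₀)) • ((0 : V), (1 : ℝ)) := by
    ext <;> simp [smul_smul, inv_mul_cancel₀ hε.ne']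
  rw [hyt]
  exact S.add_mem (S.smul_mem _ hy) (S.smul_mem _ hvert)

theorem exists_linearMap_add_le_of_forall_smul_mem (hE : Convex ℝ E)
    (hup : ∀ y t t', (y, t) ∈ E → t ≤ t' → (y, t') ∈ E)
    (habs : ∀ y, ∃ ε : ℝ, 0 < ε ∧ ∃ t, (ε • y, t) ∈ E) {μ : ℝ} (hμ : ((0 : V), μ) ∉ E) :
    ∃ φ : V →ₗ[ℝ] ℝ, ∀ y t, (y, t) ∈ E → μ + φ y ≤ t := by
  obtain ⟨F, hF0, hF⟩ := geometric_hahn_banach_of_nonempty_interior_point hE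
    (fun h => hμ (interior_subset h)) (interior_nonempty_of_forall_smul_mem hE hup habs)
  have hc := apply_zero_one_neg_of_forall_le (F := F.toLinearMap)
    (fun h => hF0 (ContinuousLinearMap.coe_injective h)) hF hup habs
  refine ⟨(-F (0, 1))⁻¹ • F.toLinearMap ∘ₗ LinearMap.inl ℝ V ℝ, fun y t h => ?_⟩
  have := hF _ h
  rw [map_prod_eq_map_fst_add_mul F y t, map_prod_eq_map_fst_add_mul F 0 μ, Prod.mk_zero_zero,
    map_zero, zero_add] at this
  simp only [LinearMap.smul_apply, LinearMap.comp_apply, LinearMap.inl_apply,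
    ContinuousLinearMap.coe_coe, smul_eq_mul, inv_mul_eq_div]
  have hc' : 0 < -F (0, 1) := neg_pos.mpr hc
  rw [← le_sub_iff_add_le', div_le_iff₀ hc']
  linarith

end Separation

theorem exists_linearMap_add_le_of_forall_smul_mem_span {W : Type*} [NormedAddCommGroup W]
    [NormedSpace ℝ W] [FiniteDimensional ℝ W] {E : Set (W × ℝ)} (hE : Convex ℝ E)
    (hup : ∀ y t t', (y, t) ∈ E → t ≤ t' → (y, t') ∈ E)
    (habs : ∀ y ∈ Submodule.span ℝ (Prod.fst '' E), ∃ ε : ℝ, 0 < ε ∧ ∃ t, (ε • y, t) ∈ E)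
    {μ : ℝ} (hμ : ((0 : W), μ) ∉ E) :
    ∃ φ : W →ₗ[ℝ] ℝ, ∀ y t, (y, t) ∈ E → μ + φ y ≤ t := by
  set L := Submodule.span ℝ (Prod.fst '' E)
  obtain ⟨φ, hφ⟩ := exists_linearMap_add_le_of_forall_smul_mem
    (hE.linear_preimage (L.subtype.prodMap LinearMap.id)) (fun y t t' h ht => hup _ _ _ h ht)
    (fun y => habs y y.2) (μ := μ) hμ
  obtain ⟨ψ, hψ⟩ := LinearMap.exists_extend φ
  refine ⟨ψ, fun y t h => ?_⟩
  have hy : y ∈ L := Submodule.subset_span ⟨(y, t), h, rfl⟩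
  simpa [← hψ] using hφ ⟨y, hy⟩ t h

theorem ConvexOn.exists_linearMap_add_le_add {X W : Type*} [AddCommGroup X] [Module ℝ X]
    [NormedAddCommGroup W] [NormedSpace ℝ W] [FiniteDimensional ℝ W]
    {Sf : Set X} {Sg : Set W} {φ : X → ℝ} {ψ : W → ℝ} (hφ : ConvexOn ℝ Sf φ)
    (hψ : ConvexOn ℝ Sg ψ) (T : X →ₗ[ℝ] W) {μ : ℝ}
    (hμ : ∀ x ∈ Sf, T x ∈ Sg → μ ≤ φ x + ψ (T x))
    (habs : ∀ y ∈ Submodule.span ℝ (Sg - T '' Sf), ∃ ε : ℝ, 0 < ε ∧ ε • y ∈ Sg - T '' Sf) :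
    ∃ s : W →ₗ[ℝ] ℝ, ∀ x ∈ Sf, ∀ r ∈ Sg, μ + s (r - T x) ≤ φ x + ψ r := by
  set E : Set (W × ℝ) := {p | ∃ x ∈ Sf, ∃ r ∈ Sg, r - T x = p.1 ∧ φ x + ψ r < p.2}
  have hconv : Convex ℝ E := by
    rintro ⟨_, t₁⟩ ⟨x₁, hx₁, r₁, hr₁, rfl, h₁⟩ ⟨_, t₂⟩ ⟨x₂, hx₂, r₂, hr₂, rfl, h₂⟩ a b ha hb hab
    refine ⟨a • x₁ + b • x₂, hφ.1 hx₁ hx₂ ha hb hab, a • r₁ + b • r₂, hψ.1 hr₁ hr₂ ha hb hab,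
      by simp only [Prod.smul_mk, Prod.mk_add_mk, map_add, map_smul, smul_sub]; abel, ?_⟩
    calc φ (a • x₁ + b • x₂) + ψ (a • r₁ + b • r₂)
        ≤ a * (φ x₁ + ψ r₁) + b * (φ x₂ + ψ r₂) := by
          have hφ' := hφ.2 hx₁ hx₂ ha hb hab
          have hψ' := hψ.2 hr₁ hr₂ ha hb hab
          simp only [smul_eq_mul] at hφ' hψ'
          linarith
      _ < a * t₁ + b * t₂ := by
          rcases ha.eq_or_lt with rfl | ha
          · simp only [zero_add] at hab; subst hab; linarith
          · nlinarith
  have habsE : ∀ y ∈ Submodule.span ℝ (Prod.fst '' E), ∃ ε : ℝ, 0 < ε ∧ ∃ t, (ε • y, t) ∈ E := by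
    intro y hy
    have hfst : Prod.fst '' E ⊆ Sg - T '' Sf := by
      rintro _ ⟨⟨_, _⟩, ⟨x, hx, r, hr, rfl, -⟩, rfl⟩
      exact ⟨r, hr, T x, ⟨x, hx, rfl⟩, rfl⟩
    obtain ⟨ε, hε, r, hr, _, ⟨x, hx, rfl⟩, hεy⟩ := habs y (Submodule.span_mono hfst hy)
    exact ⟨ε, hε, φ x + ψ r + 1, x, hx, r, hr, hεy, lt_add_one _⟩
  have hμE : ((0 : W), μ) ∉ E := by
    rintro ⟨x, hx, r, hr, hr0, hlt⟩
    obtain rfl : r = T x := sub_eq_zero.mp hr0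
    exact (hμ x hx hr).not_gt hlt
  obtain ⟨s, hs⟩ := exists_linearMap_add_le_of_forall_smul_mem_span hconv
    (fun y t t' ⟨x, hx, r, hr, hy, ht⟩ htt' => ⟨x, hx, r, hr, hy, ht.trans_le htt'⟩) habsE hμE
  exact ⟨s, fun x hx r hr => le_of_forall_gt_imp_ge_of_dense fun t ht =>
    hs _ t ⟨x, hx, r, hr, rfl, ht⟩⟩

lemma EConvex.sum_apply {ι E : Type*} [Fintype ι] [AddCommGroup E] [Module ℝ E]
    {g : ι → E → EReal} (hg : ∀ i, EConvex (g i)) : EConvex (fun r : ι → E => ∑ i, g i (r i)) := by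
  intro r s a b ha hb hab
  have hmul (c : ℝ) (hc : 0 ≤ c) (u : ι → EReal) : (c : EReal) * ∑ i, u i = ∑ i, c * u i :=
    map_sum (⟨⟨((c : EReal) * ·), mul_zero _⟩, EReal.left_distrib_of_nonneg_of_ne_top
      (EReal.coe_nonneg.mpr hc) (EReal.coe_ne_top c)⟩ : EReal →+ EReal) u _
  calc ∑ i, g i ((a • r + b • s) i) ≤ ∑ i, (a * g i (r i) + b * g i (s i)) :=
        Finset.sum_le_sum fun i _ => hg i _ _ a b ha hb hab
    _ = _ := by rw [Finset.sum_add_distrib, hmul a ha, hmul b hb]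

lemma EConvex.convexOn_toReal {E : Type*} [AddCommGroup E] [Module ℝ E] {f : E → EReal}
    (hf : EConvex f) (hbot : ∀ x, f x ≠ ⊥) : ConvexOn ℝ (edom f) (fun x => (f x).toReal) := by
  have hle : ∀ x ∈ edom f, ∀ y ∈ edom f, ∀ a b : ℝ, 0 ≤ a → 0 ≤ b → a + b = 1 →
      f (a • x + b • y) ≤ ((a * (f x).toReal + b * (f y).toReal : ℝ) : EReal) := by
    intro x hx y hy a b ha hb hab
    have := hf x y a b ha hb hab
    rwa [← EReal.coe_toReal hx (hbot x), ← EReal.coe_toReal hy (hbot y), ← EReal.coe_mul,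
      ← EReal.coe_mul, ← EReal.coe_add] at this
  refine ⟨fun x hx y hy a b ha hb hab => ?_, fun x hx y hy a b ha hb hab => ?_⟩
  · exact ne_top_of_le_ne_top (EReal.coe_ne_top _) (hle x hx y hy a b ha hb hab)
  · simpa only [EReal.toReal_coe, smul_eq_mul] using
      EReal.toReal_le_toReal (hle x hx y hy a b ha hb hab) (hbot _) (EReal.coe_ne_top _)

lemma exists_pos_smul_mem_of_zero_mem_sriSet {W : Type*} [NormedAddCommGroup W]
    [NormedSpace ℝ W] [FiniteDimensional ℝ W] {C : Set W} (h : 0 ∈ sriSet C) :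
    ∀ y ∈ Submodule.span ℝ C, ∃ ε : ℝ, 0 < ε ∧ ε • y ∈ C := by
  intro y hy
  obtain ⟨-, hcone⟩ := h
  simp only [sub_zero, Set.image_id'] at hcone
  rw [(Submodule.closed_of_finiteDimensional _).closure_eq, Set.ext_iff] at hcone
  obtain ⟨t, ht, c, hc, rfl⟩ := (hcone y).mpr hy
  exact ⟨t⁻¹, inv_pos.mpr ht, by rwa [smul_smul, inv_mul_cancel₀ ht.ne', one_smul]⟩

theorem EConvex.exists_linearMap_coe_add_le_add {X W : Type*} [AddCommGroup X] [Module ℝ X]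
    [NormedAddCommGroup W] [NormedSpace ℝ W] [FiniteDimensional ℝ W] {f : X → EReal}
    {g : W → EReal} (hf : EConvex f) (hfbot : ∀ x, f x ≠ ⊥) (hg : EConvex g)
    (hgbot : ∀ r, g r ≠ ⊥) (T : X →ₗ[ℝ] W) {μ : ℝ} (hμ : ∀ x, (μ : EReal) ≤ f x + g (T x))
    (hqc : 0 ∈ sriSet (edom g - T '' edom f)) :
    ∃ s : W →ₗ[ℝ] ℝ, ∀ x r, (μ : EReal) + s (r - T x) ≤ f x + g r := by
  have hsum : ∀ x ∈ edom f, ∀ r ∈ edom g,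
      f x + g r = (((f x).toReal + (g r).toReal : ℝ) : EReal) := fun x hx r hr => by
    rw [EReal.coe_add, EReal.coe_toReal hx (hfbot x), EReal.coe_toReal hr (hgbot r)]
  obtain ⟨s, hs⟩ := (hf.convexOn_toReal hfbot).exists_linearMap_add_le_add
    (hg.convexOn_toReal hgbot) T (fun x hx hTx => by
      have := hμ x
      rwa [hsum x hx _ hTx, EReal.coe_le_coe_iff] at this)
    (exists_pos_smul_mem_of_zero_mem_sriSet hqc)
  refine ⟨s, fun x r => ?_⟩
  by_cases hx : f x = ⊤
  · rw [hx, EReal.top_add_of_ne_bot (hgbot r)]; exact le_top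
  by_cases hr : g r = ⊤
  · rw [hr, EReal.add_top_of_ne_bot (hfbot x)]; exact le_top
  rw [hsum x hx r hr, ← EReal.coe_add, EReal.coe_le_coe_iff]
  exact hs x hx r hr

lemma EReal.sum_ne_bot {ι : Type*} {s : Finset ι} {u : ι → EReal} (h : ∀ i ∈ s, u i ≠ ⊥) :
    ∑ i ∈ s, u i ≠ ⊥ :=
  Finset.sum_induction _ (· ≠ ⊥) (fun _ _ ha hb => EReal.add_ne_bot_iff.mpr ⟨ha, hb⟩)
    (by simp) h

lemma exists_add_ne_top_of_zero_mem_sub {X W : Type*} [AddGroup W] {f : X → EReal}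
    {g : W → EReal} {T : X → W} (h : (0 : W) ∈ edom g - T '' edom f) :
    ∃ x, f x + g (T x) ≠ ⊤ := by
  obtain ⟨_, hr, _, ⟨x, hx, rfl⟩, hr0⟩ := h
  obtain rfl := sub_eq_zero.mp hr0
  exact ⟨x, EReal.add_ne_top hx hr⟩

lemma exists_coe_eq_of_mem_argminSet {α : Type*} {p : α → EReal} {x y : α}
    (hx : x ∈ argminSet p) (hbot : p x ≠ ⊥) (hy : p y ≠ ⊤) : ∃ μ : ℝ, p x = μ :=
  ⟨(p x).toReal, (EReal.coe_toReal (ne_top_of_le_ne_top hy (hx y)) hbot).symm⟩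

lemma mem_argminSet_and_iInf_eq {α : Type*} {p : α → EReal} {z₀ : α} {c : EReal}
    (h : ∀ z, c ≤ p z) (h₀ : p z₀ ≤ c) : z₀ ∈ argminSet p ∧ ⨅ z, p z = c :=
  ⟨fun z => h₀.trans (h z), le_antisymm (iInf_le_of_le z₀ h₀) (le_iInf h)⟩

lemma coe_le_add_eind_diagonal {X : Type*} {n : ℕ} {H : (Fin (n + 1) → X) → EReal} {μ : ℝ}
    (hbot : ∀ Z, H Z ≠ ⊥) (hμ : ∀ x, (μ : EReal) ≤ H fun _ => x) (Z : Fin (n + 1) → X) :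
    (μ : EReal) ≤ H Z + eind {Z | ∀ i j, Z i = Z j} Z := by
  by_cases hZ : Z ∈ {Z : Fin (n + 1) → X | ∀ i j, Z i = Z j}
  · rw [eind, if_pos hZ, add_zero, show Z = fun _ => Z 0 from funext fun i => hZ i 0]
    exact hμ _
  · rw [eind, if_neg hZ, EReal.add_top_of_ne_bot (hbot Z)]
    exact le_top

section ProductSpace

variable {X : Type*} [NormedAddCommGroup X] [InnerProductSpace ℝ X]

lemma coe_neg_le_econjPi_add_econjPi_neg {n : ℕ} {H : (Fin n → X) → EReal}
    {D : Set (Fin n → X)} {Z : Fin n → X} {μ : ℝ} (hZ : Z ∈ D) (hHZ : H Z = μ)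
    (U : Fin n → X) : ((-μ : ℝ) : EReal) ≤ econjPi H U + econjPi (eind D) (-U) := by
  have h₁ : ((∑ i, ⟪Z i, U i⟫_ℝ - μ : ℝ) : EReal) ≤ econjPi H U :=
    le_iSup_of_le Z (by rw [hHZ, EReal.coe_sub])
  have h₂ : ((-∑ i, ⟪Z i, U i⟫_ℝ : ℝ) : EReal) ≤ econjPi (eind D) (-U) :=
    le_iSup_of_le Z (by simp [eind, hZ, inner_neg_right])
  calc ((-μ : ℝ) : EReal) = ((∑ i, ⟪Z i, U i⟫_ℝ - μ + -∑ i, ⟪Z i, U i⟫_ℝ : ℝ) : EReal) := by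
        ring_nf
    _ ≤ _ := by rw [EReal.coe_add]; exact add_le_add h₁ h₂

lemma econjPi_le_coe_neg {n : ℕ} {H : (Fin n → X) → EReal} {U : Fin n → X} {μ : ℝ}
    (h : ∀ Z, (μ : EReal) + ((∑ j, ⟪Z j, U j⟫_ℝ : ℝ) : EReal) ≤ H Z) :
    econjPi H U ≤ ((-μ : ℝ) : EReal) := by
  refine iSup_le fun Z => EReal.sub_le_of_le_add ?_
  calc ((∑ j, ⟪Z j, U j⟫_ℝ : ℝ) : EReal)
      = ((-μ : ℝ) : EReal) + ((μ : EReal) + ((∑ j, ⟪Z j, U j⟫_ℝ : ℝ) : EReal)) := by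
        rw [← EReal.coe_add, ← EReal.coe_add, neg_add_cancel_left]
    _ ≤ ((-μ : ℝ) : EReal) + H Z := add_le_add_right (h Z) _

lemma econjPi_eind_diagonal {n : ℕ} {U : Fin (n + 1) → X} (hU : ∑ j, U j = 0) :
    econjPi (eind {Z : Fin (n + 1) → X | ∀ i j, Z i = Z j}) U = 0 := by
  refine le_antisymm (iSup_le fun Z => ?_) (le_iSup_of_le 0 (by simp [eind]))
  by_cases hZ : ∀ i j, Z i = Z j
  · have : ∑ j, ⟪Z j, U j⟫_ℝ = 0 := by
      rw [Finset.sum_congr rfl fun j _ => by rw [hZ j 0], ← inner_sum, hU, inner_zero_right]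
    simp [eind, if_pos hZ, this]
  · simp [eind, if_neg hZ]

lemma exists_sum_eq_zero_sum_inner_eq [CompleteSpace X] {m : ℕ} (A : Fin m → X →L[ℝ] ℝ)
    (s : (Fin m → ℝ) →ₗ[ℝ] ℝ) : ∃ U : Fin (m + 1) → X, ∑ j, U j = 0 ∧ ∀ Z : Fin (m + 1) → X,
      ∑ j, ⟪Z j, U j⟫_ℝ = s ((fun i => A i (Z i.castSucc)) - fun i => A i (Z (Fin.last m))) := by
  set u : Fin m → X := fun i =>
    s (fun j => if i = j then 1 else 0) • (InnerProductSpace.toDual ℝ X).symm (A i)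
  refine ⟨Fin.snoc u (-∑ i, u i), by simp [Fin.sum_univ_castSucc], fun Z => ?_⟩
  have hA (i : Fin m) (v : X) : ⟪v, (InnerProductSpace.toDual ℝ X).symm (A i)⟫_ℝ = A i v := by
    rw [real_inner_comm, InnerProductSpace.toDual_symm_apply]
  rw [s.pi_apply_eq_sum_univ]
  simp only [u, Fin.sum_univ_castSucc, Fin.snoc_castSucc, Fin.snoc_last, inner_neg_right,
    inner_sum, real_inner_smul_right, hA, ← sub_eq_add_neg, ← Finset.sum_sub_distrib]
  exact Finset.sum_congr rfl fun i _ => by simp only [Pi.sub_apply, smul_eq_mul]; ring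

end ProductSpace

theorem statement7_general
    {X : Type*} [NormedAddCommGroup X] [InnerProductSpace ℝ X] [CompleteSpace X]
    {m : ℕ}
    (f : X → EReal) (hf : Gamma0 f)
    (gs : Fin m → ℝ → EReal) (hgs : ∀ i, Gamma0 (gs i))
    (A : Fin m → (X →L[ℝ] ℝ))
    (hSp : (argminSet (fun x => f x + ∑ i, gs i (A i x))).Nonempty)
    (hqc : (0 : Fin m → ℝ) ∈ sriSet
      (edom (fun y : Fin m → ℝ => ∑ i, gs i (y i)) - (fun x => fun i => A i x) '' edom f))
    (Hf : (Fin (m + 1) → X) → EReal)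
    (hHf : ∀ Z, Hf Z = (∑ i : Fin m, gs i (A i (Z i.castSucc))) + f (Z (Fin.last m)))
    (D : Set (Fin (m + 1) → X)) (hD : D = {Z | ∀ i j, Z i = Z j}) :
    (argminSet (fun Z => Hf Z + eind D Z)).Nonempty ∧
    (argminSet (fun U => econjPi Hf U + econjPi (eind D) (-U))).Nonempty ∧
    ((⨅ Z : Fin (m + 1) → X, (Hf Z + eind D Z))
      = - ⨅ U : Fin (m + 1) → X, (econjPi Hf U + econjPi (eind D) (-U))) := by
  subst hD
  have hGbot (r : Fin m → ℝ) : ∑ i, gs i (r i) ≠ ⊥ := EReal.sum_ne_bot fun i _ => (hgs i).1.2 _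
  have hHbot (Z : Fin (m + 1) → X) : Hf Z ≠ ⊥ := by
    rw [hHf]
    exact EReal.add_ne_bot_iff.mpr ⟨hGbot _, hf.1.2 _⟩
  obtain ⟨xs, hxs⟩ := hSp
  obtain ⟨x₀, hx₀⟩ := exists_add_ne_top_of_zero_mem_sub hqc.1
  obtain ⟨μ, hμ⟩ := exists_coe_eq_of_mem_argminSet hxs
    (EReal.add_ne_bot_iff.mpr ⟨hf.1.2 _, hGbot _⟩) hx₀
  have hHμ (x : X) : (μ : EReal) ≤ Hf fun _ => x := by
    rw [hHf, add_comm, ← hμ]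
    exact hxs x
  have hHxs : Hf (fun _ => xs) = μ := by rw [hHf, add_comm, hμ]
  obtain ⟨s, hs⟩ := hf.2.2.exists_linearMap_coe_add_le_add hf.1.2
    (EConvex.sum_apply fun i => (hgs i).2.2) hGbot (LinearMap.pi fun i => (A i : X →ₗ[ℝ] ℝ))
    (fun x => hμ.symm.trans_le (hxs x)) hqc
  obtain ⟨U, hU0, hUZ⟩ := exists_sum_eq_zero_sum_inner_eq A s
  have hdual :
      econjPi Hf U + econjPi (eind {Z | ∀ i j, Z i = Z j}) (-U) ≤ ((-μ : ℝ) : EReal) := by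
    rw [econjPi_eind_diagonal (by simp [hU0]), add_zero]
    exact econjPi_le_coe_neg fun Z => by rw [hUZ, hHf, add_comm (∑ _, _)]; exact hs _ _
  have hxsD : (fun _ => xs) ∈ {Z : Fin (m + 1) → X | ∀ i j, Z i = Z j} := fun _ _ => rfl
  obtain ⟨hZmin, hZinf⟩ := mem_argminSet_and_iInf_eq (coe_le_add_eind_diagonal hHbot hHμ)
    (by rw [eind, if_pos hxsD, add_zero, hHxs])
  obtain ⟨hUmin, hUinf⟩ :=
    mem_argminSet_and_iInf_eq (coe_neg_le_econjPi_add_econjPi_neg hxsD hHxs) hdual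
  exact ⟨⟨_, hZmin⟩, ⟨U, hUmin⟩, by rw [hZinf, hUinf, EReal.coe_neg, neg_neg]⟩

/-- Claim 2: primal/dual attainment and zero duality gap for the
product-space reformulation `minimize H + ι_D` used by the DRS operator of Type-II. -/
theorem statement7
    {X : Type*} [NormedAddCommGroup X] [InnerProductSpace ℝ X] [CompleteSpace X]
    {m : ℕ}
    (f : X → EReal) (hf : Gamma0 f)
    (gs : Fin m → ℝ → EReal) (hgs : ∀ i, Gamma0 (gs i))
    (A : Fin m → (X →L[ℝ] ℝ)) (hA : ∀ i, A i ≠ 0)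
    (hSp : (argminSet (fun x => f x + ∑ i, gs i (A i x))).Nonempty)
    (hqc : (0 : Fin m → ℝ) ∈ sriSet
      (edom (fun y : Fin m → ℝ => ∑ i, gs i (y i)) - (fun x => fun i => A i x) '' edom f))
    (Hf : (Fin (m + 1) → X) → EReal)
    (hHf : ∀ Z, Hf Z = (∑ i : Fin m, gs i (A i (Z i.castSucc))) + f (Z (Fin.last m)))
    (D : Set (Fin (m + 1) → X)) (hD : D = {Z | ∀ i j, Z i = Z j}) :
    (argminSet (fun Z => Hf Z + eind D Z)).Nonempty ∧
    (argminSet (fun U => econjPi Hf U + econjPi (eind D) (-U))).Nonempty ∧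
    ((⨅ Z : Fin (m + 1) → X, (Hf Z + eind D Z))
      = - ⨅ U : Fin (m + 1) → X, (econjPi Hf U + econjPi (eind D) (-U))) :=
  statement7_general f hf gs hgs A hSp hqc Hf hHf D hD
end
end

section
/- Let X and K be real Hilbert spaces, f ∈ Γ₀(X), g ∈ Γ₀(K), and A : X → K a bounded linear operator such that S_p := argmin_{x∈X}(f(x) + g(Ax)) ≠ ∅ and the qualification condition 0 ∈ sri(dom(g) − A(dom(f))) holds. Define F(x,y) := f(x) + g(y), N(Ǎ) := {(x, Ax) : x ∈ X} with orthogonal projection P_{N(Ǎ)}, and T_DRSI := (2 prox_F − I) ∘ (2 P_{N(Ǎ)} − I) on X × K. If the three sets S_p, ∂f(S_p) := ⋃_{x∈S_p} ∂f(x), and ⋃_{x∈S_p}({ν ∈ K : −A*ν ∈ ∂f(x)} ∩ ∂g(Ax)) are bounded, then Fix(T_DRSI) is a bounded subset of X × K. -/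
noncomputable section

open Filter Topology Bornology
open scoped InnerProductSpace Pointwise Classical

/- A fixed point `z` of `T` decodes, with `(x, A x) := P z`, into subgradients
`x - z.1 ∈ ∂f(x)` and `A x - z.2 ∈ ∂g(A x)` (prox points are resolvents), which are linked by
`x - z.1 = -A*(A x - z.2)` since `z - P z` is orthogonal to the graph of `A`. Summing the two
subgradient inequalities shows `x ∈ S_p`, hence `z = (x - u, A x - ν)` with `x ∈ S_p`,
`u ∈ ∂f(S_p)` and `ν` in the bounded dual set. -/

lemma nonneg_of_forall_nonneg_add_mul {c d : ℝ} (h : ∀ t : ℝ, 0 < t → t ≤ 1 → 0 ≤ c + t * d) :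
    0 ≤ c := by
  have hlim : Tendsto (fun t : ℝ => c + t * d) (𝓝[>] 0) (𝓝 c) := by
    have := (by fun_prop : Continuous fun t : ℝ => c + t * d).tendsto' 0 c (by simp)
    exact this.mono_left nhdsWithin_le_nhds
  refine ge_of_tendsto hlim ?_
  filter_upwards [Ioc_mem_nhdsGT one_pos] with t ht using h t ht.1 ht.2

lemma eq_zero_of_forall_mul_nonneg {s m : ℝ} (h : ∀ t : ℝ, 0 ≤ t * (s + t * m)) : s = 0 := by
  have hpos : 0 ≤ s := nonneg_of_forall_nonneg_add_mul fun t ht _ =>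
    nonneg_of_mul_nonneg_right (h t) ht
  have hneg : 0 ≤ -s := nonneg_of_forall_nonneg_add_mul (d := m) fun t ht _ =>
    nonneg_of_mul_nonneg_right (by linear_combination h (-t)) ht
  linarith

lemma norm_add_smul_sq {H : Type*} [NormedAddCommGroup H] [InnerProductSpace ℝ H]
    (a b : H) (t : ℝ) :
    ‖a + t • b‖ ^ 2 = ‖a‖ ^ 2 + 2 * t * ⟪a, b⟫_ℝ + t ^ 2 * ‖b‖ ^ 2 := by
  rw [norm_add_sq_real, real_inner_smul_right, norm_smul, Real.norm_eq_abs, mul_pow, sq_abs]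
  ring

section Prox

variable {H : Type*} [NormedAddCommGroup H] {f : H → EReal} {x p : H}

lemma IsProxPt.mem_edom (hf : (edom f).Nonempty) (hp : IsProxPt f x p) : p ∈ edom f := by
  obtain ⟨x₀, hx₀⟩ := hf
  intro htop
  have h := hp x₀
  rw [htop, EReal.top_add_of_ne_bot (EReal.coe_ne_bot _), top_le_iff] at h
  exact EReal.add_ne_top hx₀ (EReal.coe_ne_top _) h

variable [InnerProductSpace ℝ H]

lemma sub_mem_esubdiff_of_isProxPt (hf : EProper f) (hconv : EConvex f) (hp : IsProxPt f x p) :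
    x - p ∈ esubdiff f p := by
  intro y
  by_cases hy : f y = ⊤
  · rw [hy]; exact le_top
  obtain ⟨a, ha⟩ : ∃ a : ℝ, f p = a :=
    ⟨_, (EReal.coe_toReal (hp.mem_edom hf.1) (hf.2 p)).symm⟩
  obtain ⟨b, hb⟩ : ∃ b : ℝ, f y = b := ⟨_, (EReal.coe_toReal hy (hf.2 y)).symm⟩
  rw [ha, hb, ← EReal.coe_add, EReal.coe_le_coe_iff]
  -- compare `p` with the points `p + t • (y - p)` of the segment towards `y`
  have key : ∀ t : ℝ, 0 < t → t ≤ 1 →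
      0 ≤ (b - a + ⟪p - x, y - p⟫_ℝ) + t * (‖y - p‖ ^ 2 / 2) := by
    intro t ht0 ht1
    have hseg : (1 - t) • p + t • y = p + t • (y - p) := by module
    have hcv := hconv p y (1 - t) t (by linarith) ht0.le (by ring)
    rw [hseg, ha, hb] at hcv
    have hle := (hp (p + t • (y - p))).trans (add_le_add_left hcv _)
    rw [ha] at hle
    have hreal : a + 1 / 2 * ‖p - x‖ ^ 2 ≤
        ((1 - t) * a + t * b) + 1 / 2 * ‖p + t • (y - p) - x‖ ^ 2 := by
      exact_mod_cast hle
    rw [show p + t • (y - p) - x = (p - x) + t • (y - p) by abel, norm_add_smul_sq] at hreal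
    refine nonneg_of_mul_nonneg_right ?_ ht0
    nlinarith
  have hinner : ⟪y - p, x - p⟫_ℝ = -⟪p - x, y - p⟫_ℝ := by
    rw [real_inner_comm, ← inner_neg_left, neg_sub]
  linarith [nonneg_of_forall_nonneg_add_mul key]

end Prox

section Graph

variable {X K : Type*} [NormedAddCommGroup X] [InnerProductSpace ℝ X]
  [NormedAddCommGroup K] [InnerProductSpace ℝ K]

lemma inner_add_inner_eq_zero_of_forall_le {a₁ b₁ : X} {a₂ b₂ : K}
    (h : ∀ t : ℝ, ‖a₁‖ ^ 2 + ‖a₂‖ ^ 2 ≤ ‖a₁ + t • b₁‖ ^ 2 + ‖a₂ + t • b₂‖ ^ 2) :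
    ⟪a₁, b₁⟫_ℝ + ⟪a₂, b₂⟫_ℝ = 0 := by
  have := eq_zero_of_forall_mul_nonneg (s := 2 * (⟪a₁, b₁⟫_ℝ + ⟪a₂, b₂⟫_ℝ))
    (m := ‖b₁‖ ^ 2 + ‖b₂‖ ^ 2) fun t => by
      have := h t
      rw [norm_add_smul_sq, norm_add_smul_sq] at this
      linear_combination this
  linarith

variable [CompleteSpace X] [CompleteSpace K]

lemma sub_eq_neg_adjoint_of_forall_graph_le (A : X →L[ℝ] K) {z p : X × K}
    (hp : A p.1 = p.2)
    (hmin : ∀ w : X × K, A w.1 = w.2 →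
      ‖z.1 - p.1‖ ^ 2 + ‖z.2 - p.2‖ ^ 2 ≤ ‖z.1 - w.1‖ ^ 2 + ‖z.2 - w.2‖ ^ 2) :
    p.1 - z.1 = -A.adjoint (p.2 - z.2) := by
  have horth : ∀ h : X, ⟪z.1 - p.1, h⟫_ℝ + ⟪z.2 - p.2, A h⟫_ℝ = 0 := fun h =>
    inner_add_inner_eq_zero_of_forall_le fun t => by
      have := hmin (p.1 - t • h, p.2 - t • A h) (by simp [hp])
      simpa only [neg_smul, sub_neg_eq_add, sub_sub_eq_add_sub, add_sub_right_comm,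
        ← sub_eq_add_neg] using this
  have h0 := horth (z.1 - p.1 + A.adjoint (z.2 - p.2))
  rw [← ContinuousLinearMap.adjoint_inner_left, ← inner_add_left, inner_self_eq_zero,
    ← neg_sub p.2 z.2, map_neg] at h0
  linear_combination (norm := module) -h0

lemma mem_argminSet_of_mem_esubdiff (A : X →L[ℝ] K) {f : X → EReal} {g : K → EReal}
    {x : X} {ν : K} (hf : -(A.adjoint ν) ∈ esubdiff f x) (hg : ν ∈ esubdiff g (A x)) :
    x ∈ argminSet (fun x => f x + g (A x)) := by
  intro y
  have hsum : ⟪y - x, -(A.adjoint ν)⟫_ℝ + ⟪A y - A x, ν⟫_ℝ = 0 := by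
    rw [inner_neg_right, ContinuousLinearMap.adjoint_inner_right, map_sub]
    ring
  calc f x + g (A x)
      = ((⟪y - x, -(A.adjoint ν)⟫_ℝ + ⟪A y - A x, ν⟫_ℝ : ℝ) : EReal) + (f x + g (A x)) := by
        rw [hsum, EReal.coe_zero, zero_add]
    _ = (⟪y - x, -(A.adjoint ν)⟫_ℝ + f x) + (⟪A y - A x, ν⟫_ℝ + g (A x)) := by
        rw [EReal.coe_add]; ac_rfl
    _ ≤ f y + g (A y) := add_le_add (hf y) (hg (A y))

end Graph

lemma eq_of_two_smul_sub_eq {E : Type*} [AddCommGroup E] [Module ℝ E] {q p z : E}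
    (h : (2 : ℝ) • q - ((2 : ℝ) • p - z) = z) : q = p :=
  smul_right_injective E (two_ne_zero (α := ℝ)) (by linear_combination (norm := module) h)

lemma sub_mem_esubdiff_of_reflection_fixed {H : Type*} [NormedAddCommGroup H]
    [InnerProductSpace ℝ H] {f : H → EReal} (hf : EProper f) (hconv : EConvex f) {p z q : H}
    (hq : IsProxPt f ((2 : ℝ) • p - z) q) (h : (2 : ℝ) • q - ((2 : ℝ) • p - z) = z) :
    p - z ∈ esubdiff f p := by
  have := sub_mem_esubdiff_of_isProxPt hf hconv hq
  rwa [eq_of_two_smul_sub_eq h, show (2 : ℝ) • p - z - p = p - z by module] at this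

theorem statement13_general
    {X K : Type*} [NormedAddCommGroup X] [InnerProductSpace ℝ X] [CompleteSpace X]
    [NormedAddCommGroup K] [InnerProductSpace ℝ K] [CompleteSpace K]
    (f : X → EReal) (g : K → EReal) (hf : Gamma0 f) (hg : Gamma0 g)
    (A : X →L[ℝ] K)
    (Sp : Set X) (hSpdef : Sp = argminSet (fun x => f x + g (A x)))
    (hbSp : IsBounded Sp)
    (hbdf : IsBounded (⋃ x ∈ Sp, esubdiff f x))
    (hbdual : IsBounded
      (⋃ x ∈ Sp, ({ν : K | -(A.adjoint ν) ∈ esubdiff f x} ∩ esubdiff g (A x))))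
    (proxf : X → X) (proxg : K → K)
    (hproxf : ∀ x, IsProxPt f x (proxf x)) (hproxg : ∀ y, IsProxPt g y (proxg y))
    (P : X × K → X × K)
    (hPmem : ∀ z : X × K, A (P z).1 = (P z).2)
    (hPmin : ∀ z w : X × K, A w.1 = w.2 →
      ‖z.1 - (P z).1‖ ^ 2 + ‖z.2 - (P z).2‖ ^ 2 ≤ ‖z.1 - w.1‖ ^ 2 + ‖z.2 - w.2‖ ^ 2)
    (T : X × K → X × K)
    (hT : ∀ z : X × K, T z =
      ((2:ℝ) • proxf ((2:ℝ) • P z - z).1 - ((2:ℝ) • P z - z).1,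
       (2:ℝ) • proxg ((2:ℝ) • P z - z).2 - ((2:ℝ) • P z - z).2)) :
    IsBounded {z : X × K | T z = z} := by
  refine ((hbSp.sub hbdf).prod ((A.lipschitz.isBounded_image hbSp).sub hbdual)).subset ?_
  rintro z (hz : T z = z)
  rw [hT, Prod.ext_iff] at hz
  simp only [Prod.fst_sub, Prod.snd_sub, Prod.smul_fst, Prod.smul_snd] at hz
  have hu := sub_mem_esubdiff_of_reflection_fixed hf.1 hf.2.2 (hproxf _) hz.1
  have hv := sub_mem_esubdiff_of_reflection_fixed hg.1 hg.2.2 (hproxg _) hz.2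
  have hu' : -A.adjoint ((P z).2 - z.2) ∈ esubdiff f (P z).1 :=
    sub_eq_neg_adjoint_of_forall_graph_le A (hPmem z) (hPmin z) ▸ hu
  rw [← hPmem z] at hv hu'
  have hxSp : (P z).1 ∈ Sp := hSpdef ▸ mem_argminSet_of_mem_esubdiff A hu' hv
  exact ⟨⟨(P z).1, hxSp, _, Set.mem_biUnion hxSp hu, sub_sub_cancel _ _⟩,
    ⟨A (P z).1, ⟨(P z).1, hxSp, rfl⟩, _, Set.mem_biUnion hxSp ⟨hu', hv⟩, by simp [hPmem z]⟩⟩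

/-- Theorem 5(a): boundedness of `Fix T_DRSI`.
If `S_p`, `∂f(S_p)`, and `⋃_{x ∈ S_p} ({ν | -A*ν ∈ ∂f(x)} ∩ ∂g(Ax))` are bounded, then the
fixed point set of the DRS operator of Type-I is bounded in `X × K`. -/
theorem statement13
    {X K : Type*} [NormedAddCommGroup X] [InnerProductSpace ℝ X] [CompleteSpace X]
    [NormedAddCommGroup K] [InnerProductSpace ℝ K] [CompleteSpace K]
    (f : X → EReal) (g : K → EReal) (hf : Gamma0 f) (hg : Gamma0 g)
    (A : X →L[ℝ] K)
    (Sp : Set X) (hSpdef : Sp = argminSet (fun x => f x + g (A x)))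
    (hSp : Sp.Nonempty)
    (hqc : (0 : K) ∈ sriSet (edom g - (fun x => A x) '' edom f))
    (hbSp : IsBounded Sp)
    (hbdf : IsBounded (⋃ x ∈ Sp, esubdiff f x))
    (hbdual : IsBounded
      (⋃ x ∈ Sp, ({ν : K | -(A.adjoint ν) ∈ esubdiff f x} ∩ esubdiff g (A x))))
    (proxf : X → X) (proxg : K → K)
    (hproxf : ∀ x, IsProxPt f x (proxf x)) (hproxg : ∀ y, IsProxPt g y (proxg y))
    (P : X × K → X × K)
    (hPmem : ∀ z : X × K, A (P z).1 = (P z).2)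
    (hPmin : ∀ z w : X × K, A w.1 = w.2 →
      ‖z.1 - (P z).1‖ ^ 2 + ‖z.2 - (P z).2‖ ^ 2 ≤ ‖z.1 - w.1‖ ^ 2 + ‖z.2 - w.2‖ ^ 2)
    (T : X × K → X × K)
    (hT : ∀ z : X × K, T z =
      ((2:ℝ) • proxf ((2:ℝ) • P z - z).1 - ((2:ℝ) • P z - z).1,
       (2:ℝ) • proxg ((2:ℝ) • P z - z).2 - ((2:ℝ) • P z - z).2)) :
    IsBounded {z : X × K | T z = z} :=
  statement13_general f g hf hg A Sp hSpdef hbSp hbdf hbdual proxf proxg hproxf hproxg P hPmem hPmin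
    T hT
end
end

section
/- Let X and K be real Hilbert spaces, f ∈ Γ₀(X), g ∈ Γ₀(K), and A : X → K a bounded linear operator such that S_p := argmin_{x∈X}(f(x) + g(Ax)) ≠ ∅, the qualification condition 0 ∈ sri(dom(g) − A(dom(f))) holds, and ‖Ǎ‖_op ≤ 1/u for some u > 0, where Ǎ : X × K → K : (x,y) ↦ Ax − y. Define T_LAL : X × K × K → X × K × K : (x,y,ν) ↦ (x_T, y_T, ν_T) by x_T := prox_f(x − u²(A*Ax − A*y) + u A*ν), y_T := prox_g(y − u²(−Ax + y) − u ν), ν_T := ν − u(A x_T − y_T). If the two sets S_p and ⋃_{x∈S_p}({ν ∈ K : −A*ν ∈ ∂f(x)} ∩ ∂g(Ax)) are bounded, then Fix(T_LAL) is a bounded subset of X × K × K. -/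
/-!
At a fixed point `(x, y, ν)` of `T_LAL` the multiplier update forces `y = A x`, and the two
proximal steps then say `u A*ν ∈ ∂f(x)` and `-u ν ∈ ∂g(A x)`. Adding the two subgradient
inequalities shows that `x` minimizes `f + g ∘ A` and that `-u ν` is a dual solution, so
`Fix T_LAL ⊆ S_p × A(S_p) × (-1/u) D`, a product of bounded sets.
-/

noncomputable section

open Filter Topology Bornology
open scoped InnerProductSpace Pointwise Classical

lemma le_of_forall_le_add_mul {a b c : ℝ} (h : ∀ t : ℝ, 0 < t → t ≤ 1 → a ≤ b + t * c) :
    a ≤ b := by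
  have hcont : Continuous fun t : ℝ => b + t * c := by fun_prop
  have hlim : Tendsto (fun t : ℝ => b + t * c) (𝓝[>] 0) (𝓝 b) :=
    (hcont.tendsto' 0 b (by simp)).mono_left nhdsWithin_le_nhds
  refine ge_of_tendsto hlim ?_
  filter_upwards [Ioc_mem_nhdsGT (zero_lt_one' ℝ)] with t ht using h t ht.1 ht.2

section Prox

variable {H : Type*} {f : H → EReal}

lemma EProper.coe_toReal (hf : EProper f) {x : H} (hx : f x ≠ ⊤) : ((f x).toReal : EReal) = f x :=
  EReal.coe_toReal hx (hf.2 x)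

variable [NormedAddCommGroup H]

lemma IsProxPt.ne_top_s14 (hf : EProper f) {z p : H} (hp : IsProxPt f z p) : f p ≠ ⊤ := by
  obtain ⟨⟨y, hy⟩, -⟩ := hf
  intro htop
  have h := hp y
  rw [htop, EReal.top_add_coe, top_le_iff] at h
  exact (EReal.add_lt_top hy (EReal.coe_ne_top _)).ne h

variable [InnerProductSpace ℝ H]

lemma IsProxPt.sub_mem_esubdiff (hf : EProper f) (hfc : EConvex f) {z p : H}
    (hp : IsProxPt f z p) : z - p ∈ esubdiff f p := by
  intro y
  rcases eq_or_ne (f y) ⊤ with hy | hy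
  · simp [hy]
  rw [← hf.coe_toReal hy, ← hf.coe_toReal (hp.ne_top_s14 hf)]
  set r := (f y).toReal
  set s := (f p).toReal
  norm_cast
  -- compare `p` with the points `p + t (y - p)` of the segment towards `y`
  refine le_of_forall_le_add_mul (c := (1 / 2) * ‖y - p‖ ^ 2) fun t ht ht1 => ?_
  have hseg := (hp ((1 - t) • p + t • y)).trans
    (add_le_add_left (hfc p y (1 - t) t (by linarith) ht.le (by ring)) _)
  rw [← hf.coe_toReal hy, ← hf.coe_toReal (hp.ne_top_s14 hf)] at hseg
  norm_cast at hseg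
  have hpt : (1 - t) • p + t • y - z = (p - z) + t • (y - p) := by
    rw [sub_smul, one_smul, smul_sub]; abel
  rw [hpt, norm_add_sq_real, real_inner_smul_right, norm_smul, mul_pow, Real.norm_eq_abs,
    sq_abs, ← neg_sub z p, inner_neg_left, real_inner_comm] at hseg
  nlinarith

end Prox

section LAL

variable {X K : Type*} [NormedAddCommGroup X] [InnerProductSpace ℝ X] [CompleteSpace X]
  [NormedAddCommGroup K] [InnerProductSpace ℝ K] [CompleteSpace K]
  {f : X → EReal} {g : K → EReal} {A : X →L[ℝ] K}

lemma mem_argminSet_add_comp_of_mem_esubdiff {x : X} {ν : K}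
    (hfx : A.adjoint ν ∈ esubdiff f x) (hgx : -ν ∈ esubdiff g (A x)) :
    x ∈ argminSet (fun x => f x + g (A x)) := by
  intro z
  have hsum := add_le_add (hfx z) (hgx (A z))
  rw [ContinuousLinearMap.adjoint_inner_right, inner_neg_right, map_sub,
    add_add_add_comm, ← EReal.coe_add, add_neg_cancel, EReal.coe_zero, zero_add] at hsum
  exact hsum

lemma mem_esubdiff_of_lal_fixed {u : ℝ} (hu : u ≠ 0) (hf : EProper f) (hfc : EConvex f)
    (hg : EProper g) (hgc : EConvex g)
    {proxf : X → X} {proxg : K → K}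
    (hproxf : ∀ x, IsProxPt f x (proxf x)) (hproxg : ∀ y, IsProxPt g y (proxg y))
    {x : X} {y ν : K}
    (hx : proxf (x - (u ^ 2) • (A.adjoint (A x) - A.adjoint y) + u • A.adjoint ν) = x)
    (hy : proxg (y - (u ^ 2) • (-(A x) + y) - u • ν) = y)
    (hν : ν - u • (A x - y) = ν) :
    A x = y ∧ u • A.adjoint ν ∈ esubdiff f x ∧ -(u • ν) ∈ esubdiff g y := by
  have hAxy : A x = y := by
    rw [sub_eq_self, smul_eq_zero, sub_eq_zero] at hν
    exact hν.resolve_left hu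
  subst hAxy
  simp only [sub_self, neg_add_cancel, smul_zero, sub_zero] at hx hy
  refine ⟨rfl, ?_, ?_⟩
  · simpa [hx] using (hproxf (x + u • A.adjoint ν)).sub_mem_esubdiff hf hfc
  · simpa [hy] using (hproxg (A x - u • ν)).sub_mem_esubdiff hg hgc

end LAL

theorem statement14_general
    {X K : Type*} [NormedAddCommGroup X] [InnerProductSpace ℝ X] [CompleteSpace X]
    [NormedAddCommGroup K] [InnerProductSpace ℝ K] [CompleteSpace K]
    (f : X → EReal) (g : K → EReal) (hf : Gamma0 f) (hg : Gamma0 g)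
    (A : X →L[ℝ] K)
    (Sp : Set X) (hSpdef : Sp = argminSet (fun x => f x + g (A x)))
    (u : ℝ) (hu : 0 < u)
    (hbSp : IsBounded Sp)
    (hbdual : IsBounded
      (⋃ x ∈ Sp, ({ν : K | -(A.adjoint ν) ∈ esubdiff f x} ∩ esubdiff g (A x))))
    (proxf : X → X) (proxg : K → K)
    (hproxf : ∀ x, IsProxPt f x (proxf x)) (hproxg : ∀ y, IsProxPt g y (proxg y))
    (T : X × K × K → X × K × K)
    (hT : ∀ (x : X) (y ν : K), T (x, y, ν) =
      (proxf (x - (u ^ 2) • (A.adjoint (A x) - A.adjoint y) + u • A.adjoint ν),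
       proxg (y - (u ^ 2) • (-(A x) + y) - u • ν),
       ν - u • (A (proxf (x - (u ^ 2) • (A.adjoint (A x) - A.adjoint y) + u • A.adjoint ν))
                 - proxg (y - (u ^ 2) • (-(A x) + y) - u • ν)))) :
    IsBounded {w : X × K × K | T w = w} := by
  set D := ⋃ x ∈ Sp, ({ν : K | -(A.adjoint ν) ∈ esubdiff f x} ∩ esubdiff g (A x))
  have hfix : {w : X × K × K | T w = w} ⊆ Sp ×ˢ ((A '' Sp) ×ˢ ((-u⁻¹) • D)) := by
    rintro ⟨x, y, ν⟩ hw
    obtain ⟨hx, hy, hν⟩ : _ ∧ _ ∧ _ := by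
      simpa only [Set.mem_ofPred_eq, hT, Prod.mk.injEq] using hw
    rw [hx, hy] at hν
    obtain ⟨rfl, hfx, hgx⟩ := mem_esubdiff_of_lal_fixed hu.ne' hf.1 hf.2.2 hg.1 hg.2.2
      hproxf hproxg hx hy hν
    have hxSp : x ∈ Sp := hSpdef ▸
      mem_argminSet_add_comp_of_mem_esubdiff (ν := u • ν) (by rwa [map_smul]) hgx
    refine ⟨hxSp, Set.mem_image_of_mem A hxSp, -(u • ν), ?_, ?_⟩
    · exact Set.mem_biUnion hxSp ⟨by simpa using hfx, hgx⟩
    · simp [smul_smul, hu.ne']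
  exact (hbSp.prod ((A.lipschitz.isBounded_image hbSp).prod (hbdual.smul₀ _))).subset hfix

/-- Theorem 5(b): boundedness of `Fix T_LAL`.
If `S_p` and `⋃_{x ∈ S_p} ({ν | -A*ν ∈ ∂f(x)} ∩ ∂g(Ax))` are bounded, then the fixed point
set of the LAL operator is bounded in `X × K × K`. -/
theorem statement14
    {X K : Type*} [NormedAddCommGroup X] [InnerProductSpace ℝ X] [CompleteSpace X]
    [NormedAddCommGroup K] [InnerProductSpace ℝ K] [CompleteSpace K]
    (f : X → EReal) (g : K → EReal) (hf : Gamma0 f) (hg : Gamma0 g)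
    (A : X →L[ℝ] K)
    (Sp : Set X) (hSpdef : Sp = argminSet (fun x => f x + g (A x)))
    (hSp : Sp.Nonempty)
    (hqc : (0 : K) ∈ sriSet (edom g - (fun x => A x) '' edom f))
    (u : ℝ) (hu : 0 < u)
    (hAcheck : ∀ (x : X) (y : K), ‖A x - y‖ ≤ (1 / u) * Real.sqrt (‖x‖ ^ 2 + ‖y‖ ^ 2))
    (hbSp : IsBounded Sp)
    (hbdual : IsBounded
      (⋃ x ∈ Sp, ({ν : K | -(A.adjoint ν) ∈ esubdiff f x} ∩ esubdiff g (A x))))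
    (proxf : X → X) (proxg : K → K)
    (hproxf : ∀ x, IsProxPt f x (proxf x)) (hproxg : ∀ y, IsProxPt g y (proxg y))
    (T : X × K × K → X × K × K)
    (hT : ∀ (x : X) (y ν : K), T (x, y, ν) =
      (proxf (x - (u ^ 2) • (A.adjoint (A x) - A.adjoint y) + u • A.adjoint ν),
       proxg (y - (u ^ 2) • (-(A x) + y) - u • ν),
       ν - u • (A (proxf (x - (u ^ 2) • (A.adjoint (A x) - A.adjoint y) + u • A.adjoint ν))
                 - proxg (y - (u ^ 2) • (-(A x) + y) - u • ν)))) :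
    IsBounded {w : X × K × K | T w = w} :=
  statement14_general f g hf hg A Sp hSpdef u hu hbSp hbdual proxf proxg hproxf hproxg T hT
end
end
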